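/- For any two k-dimensional subspaces U, V of F_q^n, the subspace distance is at least the Hamming distance of their inverse identifying vectors: d_S(U,V) ≥ d_H(ī(U), ī(V)). -/

import Mathlib

/-!
A nonzero vector of `U ⊓ V` has its last nonzero coordinate at a pivot column of both
generator matrices (in inverse echelon form the last nonzero coordinate of `∑ cᵢ Mᵢ` is the
pivot of the last row with `cᵢ ≠ 0`, since `cᵢ` is the coordinate at that pivot). Hence
restriction to the common pivot set `P ∩ Q` is injective on `U ⊓ V`, so
`dim (U ⊓ V) ≤ |P ∩ Q|`, and `d_S(U, V) = 2k - 2 dim (U ⊓ V) ≥ 2k - 2|P ∩ Q| = |P Δ Q|`.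
-/

open Module

/-- `M` is in reduced row inverse echelon form with pivot columns given by `p`
(pivots proceed from right to left). -/
def IsInvRREF {F : Type*} [Field F] {k n : ℕ}
    (M : Matrix (Fin k) (Fin n) F) (p : Fin k → Fin n) : Prop :=
  StrictAnti p ∧ (∀ i, M i (p i) = 1) ∧
    (∀ (i : Fin k) (j : Fin n), (p i : ℕ) < (j : ℕ) → M i j = 0) ∧
    (∀ i i', i' ≠ i → M i' (p i) = 0)

/-- The inverse identifying vector: the binary indicator of the pivot columns. -/
def pivotVec {k n : ℕ} (p : Fin k → Fin n) : Fin n → Bool :=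
  fun j => decide (∃ i, p i = j)

open Finset

theorem Function.exists_last_ne_zero {ι M : Type*} [Fintype ι] [LinearOrder ι] [Zero M]
    {v : ι → M} (hv : v ≠ 0) : ∃ j, v j ≠ 0 ∧ ∀ j', j < j' → v j' = 0 := by
  classical
  have hne : (univ.filter fun j => v j ≠ 0).Nonempty := by
    obtain ⟨j, hj⟩ := Function.ne_iff.mp hv
    exact ⟨j, by simpa using hj⟩
  refine ⟨_, by simpa using max'_mem _ hne, fun j' hlt => ?_⟩
  by_contra hj'
  exact (le_max' _ j' (by simpa using hj')).not_gt hlt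

theorem Submodule.finrank_le_card_of_forall_eq_zero {ι F : Type*} [Field F] [Fintype ι]
    (W : Submodule F (ι → F)) (S : Finset ι) (h : ∀ v ∈ W, (∀ j ∈ S, v j = 0) → v = 0) :
    finrank F W ≤ #S := by
  calc finrank F W ≤ finrank F (S → F) := by
        refine LinearMap.finrank_le_finrank_of_injective
          (f := (LinearMap.funLeft F F ((↑) : S → ι)).comp W.subtype) ?_
        rw [← LinearMap.ker_eq_bot, LinearMap.ker_eq_bot']
        rintro ⟨v, hvW⟩ hv
        exact Subtype.ext (h v hvW fun j hj => congrFun hv ⟨j, hj⟩)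
    _ = #S := by simp

namespace IsInvRREF

variable {F : Type*} [Field F] {k n : ℕ} {M : Matrix (Fin k) (Fin n) F} {p : Fin k → Fin n}

theorem sum_smul_apply_pivot (hM : IsInvRREF M p) (c : Fin k → F) (i : Fin k) :
    (∑ i', c i' • M i') (p i) = c i := by
  simp only [Finset.sum_apply, Pi.smul_apply, smul_eq_mul]
  rw [Finset.sum_eq_single i (fun i' _ hi' => by rw [hM.2.2.2 i i' hi', mul_zero])
    (by simp), hM.2.1 i, mul_one]

theorem linearIndependent_rows (hM : IsInvRREF M p) : LinearIndependent F (fun i => M i) := by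
  rw [Fintype.linearIndependent_iff]
  intro c hc i
  rw [← hM.sum_smul_apply_pivot c i, hc, Pi.zero_apply]

theorem finrank_span_rows (hM : IsInvRREF M p) :
    finrank F (Submodule.span F (Set.range fun i => M i)) = k := by
  rw [finrank_span_eq_card hM.linearIndependent_rows, Fintype.card_fin]

theorem exists_pivot_eq_of_mem_span (hM : IsInvRREF M p) {v : Fin n → F}
    (hv : v ∈ Submodule.span F (Set.range fun i => M i)) {j : Fin n} (hj : v j ≠ 0)
    (hlast : ∀ j', j < j' → v j' = 0) : ∃ i, p i = j := by
  obtain ⟨c, rfl⟩ := (Submodule.mem_span_range_iff_exists_fun F).mp hv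
  by_contra! hpiv
  refine hj ?_
  simp only [Finset.sum_apply, Pi.smul_apply, smul_eq_mul]
  refine Finset.sum_eq_zero fun i _ => ?_
  by_cases hci : c i = 0
  · rw [hci, zero_mul]
  have hpi : p i < j := by
    refine lt_of_le_of_ne (not_lt.mp fun hjp => hci ?_) (hpiv i)
    rw [← hM.sum_smul_apply_pivot c i]
    exact hlast _ hjp
  rw [hM.2.2.1 i j hpi, mul_zero]

theorem eq_zero_of_mem_inf {N : Matrix (Fin k) (Fin n) F} {q : Fin k → Fin n}
    (hM : IsInvRREF M p) (hN : IsInvRREF N q) {v : Fin n → F}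
    (hv : v ∈ Submodule.span F (Set.range fun i => M i) ⊓
      Submodule.span F (Set.range fun i => N i))
    (hzero : ∀ j ∈ univ.image p ∩ univ.image q, v j = 0) : v = 0 := by
  by_contra hv0
  obtain ⟨j, hj, hlast⟩ := Function.exists_last_ne_zero hv0
  obtain ⟨i₁, rfl⟩ := hM.exists_pivot_eq_of_mem_span hv.1 hj hlast
  obtain ⟨i₂, hi₂⟩ := hN.exists_pivot_eq_of_mem_span hv.2 hj hlast
  exact hj (hzero _ (mem_inter.mpr ⟨mem_image_of_mem p (mem_univ i₁),
    mem_image.mpr ⟨i₂, mem_univ i₂, hi₂⟩⟩))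

end IsInvRREF

theorem hammingDist_pivotVec {k n : ℕ} (p q : Fin k → Fin n) :
    hammingDist (pivotVec p) (pivotVec q) =
      #(univ.image p ∪ univ.image q) - #(univ.image p ∩ univ.image q) := by
  rw [← card_sdiff_of_subset inter_subset_union, hammingDist]
  congr 1
  ext j
  simp only [pivotVec, mem_univ, true_and, mem_sdiff, mem_union, mem_inter, mem_image]
  by_cases h1 : ∃ i, p i = j <;> by_cases h2 : ∃ i, q i = j <;> simp [h1, h2]

theorem stmt6_general (F : Type*) [Field F] (n k : ℕ)
    (U V : Submodule F (Fin n → F))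
    (M N : Matrix (Fin k) (Fin n) F) (p q : Fin k → Fin n)
    (hM : IsInvRREF M p) (hN : IsInvRREF N q)
    (hU : Submodule.span F (Set.range fun i => M i) = U)
    (hV : Submodule.span F (Set.range fun i => N i) = V) :
    hammingDist (pivotVec p) (pivotVec q)
      ≤ finrank F ↥(U ⊔ V) - finrank F ↥(U ⊓ V) := by
  subst hU hV
  have hinf := (Submodule.span F _ ⊓ Submodule.span F _).finrank_le_card_of_forall_eq_zero _
    fun v hv hzero => hM.eq_zero_of_mem_inf hN hv hzero
  have hdim := Submodule.finrank_sup_add_finrank_inf_eq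
    (Submodule.span F (Set.range fun i => M i)) (Submodule.span F (Set.range fun i => N i))
  rw [hM.finrank_span_rows, hN.finrank_span_rows] at hdim
  have hcard := card_union_add_card_inter (univ.image p) (univ.image q)
  rw [card_image_of_injective _ hM.1.injective, card_image_of_injective _ hN.1.injective,
    card_univ, Fintype.card_fin] at hcard
  rw [hammingDist_pivotVec]
  omega

/-- For `k`-dimensional subspaces `U, V` of `F_q^n`, the subspace distance is at
least the Hamming distance of their inverse identifying vectors. -/
theorem stmt6 (F : Type*) [Field F] [Fintype F] (n k : ℕ)
    (U V : Submodule F (Fin n → F))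
    (M N : Matrix (Fin k) (Fin n) F) (p q : Fin k → Fin n)
    (hM : IsInvRREF M p) (hN : IsInvRREF N q)
    (hU : Submodule.span F (Set.range fun i => M i) = U)
    (hV : Submodule.span F (Set.range fun i => N i) = V) :
    hammingDist (pivotVec p) (pivotVec q)
      ≤ finrank F ↥(U ⊔ V) - finrank F ↥(U ⊓ V) :=
  stmt6_general F n k U V M N p q hM hN hU hV
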